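/- arXiv:2212.09808 — 3 statements merged into one kernel-verified Lean document; each statement's English description precedes it below -/
import Mathlib

section
/- Let n ≥ 1, r > 0, Δt > 0, s₀ ∈ ℝ with s₀ < n, and let τ₁ ≥ 0 satisfy (n - s₀)·exp(-r·τ₁) ≤ 1 with τ₁ a multiple of Δt. Then ∫₀^∞ min(1, (n - s₀)·exp(-r·⌊σ/Δt⌋·Δt)) dσ ≤ τ₁ + (e^{-r·τ₁}/(1 - e^{-r·Δt}))·(n - s₀)·Δt. -/
/-!
The integrand is a step function, constant equal to `min 1 (C e^{-r j Δt})`, `C = n - s₀`,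
on `[j Δt, (j + 1) Δt)`, so its integral is `Δt` times the series of these values. Bounding
the first `k = τ₁ / Δt` terms by `1` and the remaining ones by the geometric series
`C e^{-r j Δt}` gives the claim.
-/

open MeasureTheory Set

section FloorRing

variable {α : Type*} [Ring α] [LinearOrder α] [FloorRing α]

theorem Int.floor_eq_natCast_iff_mem_Ico {u : α} {j : ℕ} : ⌊u⌋ = j ↔ u ∈ Ico (j : α) (j + 1) := by
  rw [Int.floor_eq_iff, mem_Ico]; push_cast; rfl

theorem iUnion_Ico_natCast_add_one [IsStrictOrderedRing α] :
    ⋃ j : ℕ, Ico (j : α) (j + 1) = Ici 0 := by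
  ext u
  simp only [mem_iUnion, mem_Ici]
  refine ⟨fun ⟨j, hj⟩ => (Nat.cast_nonneg j).trans hj.1, fun hu => ⟨⌊u⌋₊, ?_⟩⟩
  exact ⟨Nat.floor_le hu, Nat.lt_floor_add_one u⟩

end FloorRing

theorem hasSum_integral_comp_floor {g : ℤ → ℝ} (hg : Summable fun j : ℕ => g j) :
    HasSum (fun j : ℕ => g j) (∫ u in Ioi (0 : ℝ), g ⌊u⌋) := by
  have hpiece : ∀ j : ℕ, EqOn (fun u : ℝ => g ⌊u⌋) (fun _ => g j) (Ico (j : ℝ) (j + 1)) :=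
    fun j u hu => by simp only [Int.floor_eq_natCast_iff_mem_Ico.mpr hu]
  have hint : ∀ j : ℕ, IntegrableOn (fun u : ℝ => g ⌊u⌋) (Ico (j : ℝ) (j + 1)) := fun j =>
    (integrableOn_congr_fun (hpiece j) measurableSet_Ico).mpr (integrableOn_const (by simp))
  have hvol : ∀ j : ℕ, volume.real (Ico (j : ℝ) (j + 1)) = 1 := fun j => by
    rw [Real.volume_real_Ico_of_le (by linarith)]; ring
  have hval : ∀ j : ℕ, ∫ u in Ico (j : ℝ) (j + 1), g ⌊u⌋ = g j := fun j => by
    rw [setIntegral_congr_fun measurableSet_Ico (hpiece j), setIntegral_const, hvol, one_smul]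
  have hdisj : Pairwise (Function.onFun Disjoint fun j : ℕ => Ico (j : ℝ) (j + 1)) := fun i j hij =>
    disjoint_left.mpr fun u hi hj => hij <| by
      exact_mod_cast (Int.floor_eq_natCast_iff_mem_Ico.mpr hi).symm.trans
        (Int.floor_eq_natCast_iff_mem_Ico.mpr hj)
  have hunion : IntegrableOn (fun u : ℝ => g ⌊u⌋) (⋃ j : ℕ, Ico (j : ℝ) (j + 1)) := by
    refine integrableOn_iUnion_of_summable_integral_norm hint ?_
    refine hg.abs.congr fun j => ?_
    rw [setIntegral_congr_fun measurableSet_Ico (fun u hu => congrArg norm (hpiece j hu)),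
      setIntegral_const, hvol, one_smul, Real.norm_eq_abs]
  have h := hasSum_integral_iUnion (fun _ => measurableSet_Ico) hdisj hunion
  rw [iUnion_Ico_natCast_add_one, ← setIntegral_congr_set Ioi_ae_eq_Ici] at h
  simpa only [hval] using h

theorem hasSum_integral_comp_floor_div {g : ℤ → ℝ} (hg : Summable fun j : ℕ => g j)
    {Δt : ℝ} (hΔt : 0 < Δt) :
    HasSum (fun j : ℕ => Δt * g j) (∫ σ in Ioi 0, g ⌊σ / Δt⌋) := by
  have h := integral_comp_mul_left_Ioi (fun u => g ⌊u⌋) 0 (inv_pos.mpr hΔt)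
  simp only [mul_zero, inv_inv, smul_eq_mul, ← div_eq_inv_mul] at h
  rw [h]
  exact (hasSum_integral_comp_floor hg).mul_left Δt

theorem tsum_le_of_le_one_of_le_geometric {a : ℕ → ℝ} (ha : Summable a) {C q : ℝ}
    (hq₀ : 0 ≤ q) (hq₁ : q < 1) (k : ℕ) (hle_one : ∀ j < k, a j ≤ 1)
    (hle_geom : ∀ j, k ≤ j → a j ≤ C * q ^ j) :
    ∑' j, a j ≤ k + C * q ^ k / (1 - q) := by
  have hgeom : HasSum (fun j => C * q ^ k * q ^ j) (C * q ^ k / (1 - q)) := by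
    simpa only [div_eq_mul_inv] using (hasSum_geometric_of_lt_one hq₀ hq₁).mul_left (C * q ^ k)
  have hhead : ∑ j ∈ Finset.range k, a j ≤ k := by
    simpa using Finset.sum_le_sum fun j hj => hle_one j (Finset.mem_range.mp hj)
  have htail : ∑' j, a (j + k) ≤ C * q ^ k / (1 - q) := by
    refine hgeom.tsum_eq ▸
      ((summable_nat_add_iff k).mpr ha).tsum_le_tsum (fun j => ?_) hgeom.summable
    calc a (j + k) ≤ C * q ^ (j + k) := hle_geom _ (Nat.le_add_left k j)
      _ = C * q ^ k * q ^ j := by ring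
  rw [← ha.sum_add_tsum_nat_add k]
  exact add_le_add hhead htail

theorem broadcast_time_integral_bound_general (n : ℕ) (r Δt s₀ τ₁ : ℝ)
    (hr : 0 < r) (hΔt : 0 < Δt) (hs₀ : s₀ < n)
    (hmul : ∃ k : ℕ, τ₁ = k * Δt) :
    ∫ σ in Set.Ioi (0 : ℝ),
        min 1 (((n : ℝ) - s₀) * Real.exp (-r * (⌊σ / Δt⌋ : ℝ) * Δt)) ≤
      τ₁ + (Real.exp (-r * τ₁) / (1 - Real.exp (-r * Δt))) * ((n : ℝ) - s₀) * Δt := by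
  obtain ⟨k, rfl⟩ := hmul
  set C : ℝ := n - s₀
  set q : ℝ := Real.exp (-r * Δt)
  set g : ℤ → ℝ := fun j => min 1 (C * Real.exp (-r * j * Δt))
  have hq₁ : q < 1 := Real.exp_lt_one_iff.mpr (by nlinarith)
  have hpow : ∀ j : ℕ, Real.exp (-r * j * Δt) = q ^ j := fun j => by
    rw [← Real.exp_nat_mul]; ring_nf
  have hle_geom : ∀ j : ℕ, g j ≤ C * q ^ j := fun j => by
    simpa only [g, Int.cast_natCast, hpow] using min_le_right _ _
  have hg : Summable fun j : ℕ => g j :=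
    .of_nonneg_of_le
      (fun j => le_min zero_le_one (mul_nonneg (sub_nonneg.mpr hs₀.le) (Real.exp_pos _).le))
      hle_geom ((summable_geometric_of_lt_one (Real.exp_pos _).le hq₁).mul_left C)
  calc ∫ σ in Ioi 0, g ⌊σ / Δt⌋ = Δt * ∑' j : ℕ, g j :=
        (hasSum_integral_comp_floor_div hg hΔt).tsum_eq.symm.trans tsum_mul_left
    _ ≤ Δt * (k + C * q ^ k / (1 - q)) := by
        gcongr
        exact tsum_le_of_le_one_of_le_geometric hg (Real.exp_pos _).le hq₁ k
          (fun j _ => min_le_left _ _) (fun j _ => hle_geom j)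
    _ = _ := by rw [← hpow]; ring_nf

theorem broadcast_time_integral_bound (n : ℕ) (hn : 1 ≤ n) (r Δt s₀ τ₁ : ℝ)
    (hr : 0 < r) (hΔt : 0 < Δt) (hs₀ : s₀ < n) (hτ₁ : 0 ≤ τ₁)
    (hmul : ∃ k : ℕ, τ₁ = k * Δt)
    (hτ : ((n : ℝ) - s₀) * Real.exp (-r * τ₁) ≤ 1) :
    ∫ σ in Set.Ioi (0 : ℝ),
        min 1 (((n : ℝ) - s₀) * Real.exp (-r * (⌊σ / Δt⌋ : ℝ) * Δt)) ≤
      τ₁ + (Real.exp (-r * τ₁) / (1 - Real.exp (-r * Δt))) * ((n : ℝ) - s₀) * Δt :=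
  broadcast_time_integral_bound_general n r Δt s₀ τ₁ hr hΔt hs₀ hmul
end

section
/- Let f : ℝ≥0 → ℝ be defined by f(σ) = min(1, C·exp(-r·⌊σ/Δt⌋·Δt)) with C ≥ 0, r > 0, Δt > 0. Then f is integrable on [0,∞) and ∫₀^∞ f ≤ Δt·⌈(log max(C,1))/(r·Δt)⌉ + C·Δt/(1 - e^{-r·Δt}). -/
/-!
On `[0, ∞)` the exponential term `C * exp (-r * ⌊σ / Δt⌋ * Δt)` is the step function equal to
`C * q ^ k` on `[k Δt, (k + 1) Δt)`, where `q = exp (-r Δt) < 1`. It therefore integrates to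
`Δt * ∑ C q ^ k = C Δt / (1 - q)`, and it dominates `min 1 (…)` both from above and in absolute
value. The ceiling term of the bound is nonnegative and is not needed.
-/

open MeasureTheory Set

theorem abs_min_le_abs_right_of_nonneg {α : Type*} [AddCommGroup α] [LinearOrder α]
    [IsOrderedAddMonoid α] {a b : α} (ha : 0 ≤ a) : |min a b| ≤ |b| := by
  rcases le_total a b with hab | hba
  · rw [min_eq_left hab, abs_of_nonneg ha, abs_of_nonneg (ha.trans hab)]
    exact hab
  · rw [min_eq_right hba]

section StepFunction

variable {h : ℝ}

theorem natFloor_div_eq_of_mem_Ico (hh : 0 < h) {k : ℕ} {σ : ℝ}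
    (hσ : σ ∈ Ico (k * h) ((k + 1) * h)) : ⌊σ / h⌋₊ = k := by
  rw [Nat.floor_eq_iff (div_nonneg ((by positivity : (0 : ℝ) ≤ k * h).trans hσ.1) hh.le),
    le_div_iff₀ hh, div_lt_iff₀ hh]
  exact hσ

theorem iUnion_Ico_natCast_mul (hh : 0 < h) :
    ⋃ k : ℕ, Ico (k * h) ((k + 1) * h) = Ici 0 := by
  ext σ
  simp only [mem_iUnion, mem_Ici]
  constructor
  · rintro ⟨k, hk⟩
    exact (by positivity : (0 : ℝ) ≤ k * h).trans hk.1
  · intro hσ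
    refine ⟨⌊σ / h⌋₊, ?_, ?_⟩
    · rw [← le_div_iff₀ hh]
      exact Nat.floor_le (div_nonneg hσ hh.le)
    · rw [← div_lt_iff₀ hh]
      exact Nat.lt_floor_add_one _

theorem pairwise_disjoint_Ico_natCast_mul (hh : 0 < h) :
    Pairwise (Function.onFun Disjoint fun k : ℕ => Ico (k * h) ((k + 1) * h)) := by
  intro i j hij
  refine disjoint_left.2 fun σ hi hj => hij ?_
  rw [← natFloor_div_eq_of_mem_Ico hh hi, natFloor_div_eq_of_mem_Ico hh hj]

theorem eqOn_natFloor_div_Ico (hh : 0 < h) (g : ℕ → ℝ) (k : ℕ) :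
    EqOn (fun σ => g ⌊σ / h⌋₊) (fun _ => g k) (Ico (k * h) ((k + 1) * h)) :=
  fun _ hσ => congrArg g (natFloor_div_eq_of_mem_Ico hh hσ)

theorem setIntegral_Ico_natFloor_div (hh : 0 < h) (g : ℕ → ℝ) (k : ℕ) :
    ∫ σ in Ico (k * h) ((k + 1) * h), g ⌊σ / h⌋₊ = h * g k := by
  rw [setIntegral_congr_fun measurableSet_Ico (eqOn_natFloor_div_Ico hh g k), setIntegral_const,
    Real.volume_real_Ico_of_le (by nlinarith), smul_eq_mul]
  ring

theorem integrableOn_Ici_natFloor_div (hh : 0 < h) {g : ℕ → ℝ} (hg : Summable g) :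
    IntegrableOn (fun σ => g ⌊σ / h⌋₊) (Ici 0) := by
  rw [← iUnion_Ico_natCast_mul hh]
  refine integrableOn_iUnion_of_summable_integral_norm (fun k => ?_) ?_
  · exact (integrableOn_congr_fun (eqOn_natFloor_div_Ico hh g k) measurableSet_Ico).2
      (integrableOn_const (by simp))
  · simpa only [setIntegral_Ico_natFloor_div hh (fun k => ‖g k‖)] using
      (summable_norm_iff.2 hg).mul_left h

theorem integral_Ici_natFloor_div (hh : 0 < h) {g : ℕ → ℝ} (hg : Summable g) :
    ∫ σ in Ici 0, g ⌊σ / h⌋₊ = h * ∑' k, g k := by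
  have hint : IntegrableOn (fun σ => g ⌊σ / h⌋₊) (⋃ k : ℕ, Ico (k * h) ((k + 1) * h)) := by
    rw [iUnion_Ico_natCast_mul hh]
    exact integrableOn_Ici_natFloor_div hh hg
  rw [← iUnion_Ico_natCast_mul hh,
    integral_iUnion (fun _ => measurableSet_Ico) (pairwise_disjoint_Ico_natCast_mul hh) hint,
    ← tsum_mul_left]
  exact tsum_congr (setIntegral_Ico_natFloor_div hh g)

end StepFunction

theorem eqOn_mul_exp_intFloor_div (C r : ℝ) {Δt : ℝ} (hΔt : 0 < Δt) :
    EqOn (fun σ : ℝ => C * Real.exp (-r * (⌊σ / Δt⌋ : ℝ) * Δt))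
      (fun σ => C * Real.exp (-r * Δt) ^ ⌊σ / Δt⌋₊) (Ici 0) := fun σ hσ => by
  dsimp only
  rw [← Int.natCast_floor_eq_floor (div_nonneg hσ hΔt.le), Int.cast_natCast, ← Real.exp_nat_mul]
  ring_nf

theorem piecewise_survival_bound_integrable_general (C r Δt : ℝ)
    (hr : 0 < r) (hΔt : 0 < Δt) :
    IntegrableOn
        (fun σ : ℝ => min 1 (C * Real.exp (-r * (⌊σ / Δt⌋ : ℝ) * Δt)))
        (Set.Ici (0 : ℝ)) volume ∧
      ∫ σ in Set.Ici (0 : ℝ),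
          min 1 (C * Real.exp (-r * (⌊σ / Δt⌋ : ℝ) * Δt)) ≤
        Δt * (⌈Real.log (max C 1) / (r * Δt)⌉ : ℝ) +
          C * Δt / (1 - Real.exp (-r * Δt)) := by
  have hq : Real.exp (-r * Δt) < 1 := Real.exp_lt_one_iff.2 (by nlinarith)
  have hgeom : Summable fun k : ℕ => C * Real.exp (-r * Δt) ^ k :=
    (summable_geometric_of_lt_one (Real.exp_nonneg _) hq).mul_left C
  have hstep := eqOn_mul_exp_intFloor_div C r hΔt
  have hstep_int := (integrableOn_congr_fun hstep measurableSet_Ici).2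
    (integrableOn_Ici_natFloor_div hΔt hgeom)
  have hint : IntegrableOn (fun σ : ℝ => min 1 (C * Real.exp (-r * (⌊σ / Δt⌋ : ℝ) * Δt)))
      (Ici 0) :=
    Integrable.mono hstep_int (aestronglyMeasurable_const.inf hstep_int.1) <|
      Filter.Eventually.of_forall fun _ => abs_min_le_abs_right_of_nonneg zero_le_one
  refine ⟨hint, ?_⟩
  have hceil : (0 : ℝ) ≤ ⌈Real.log (max C 1) / (r * Δt)⌉ := Int.cast_nonneg <|
    Int.ceil_nonneg (div_nonneg (Real.log_nonneg (le_max_right C 1)) (by positivity))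
  calc ∫ σ in Ici 0, min 1 (C * Real.exp (-r * (⌊σ / Δt⌋ : ℝ) * Δt))
      ≤ ∫ σ in Ici 0, C * Real.exp (-r * (⌊σ / Δt⌋ : ℝ) * Δt) :=
        setIntegral_mono_on hint hstep_int measurableSet_Ici fun _ _ => min_le_right _ _
    _ = C * Δt / (1 - Real.exp (-r * Δt)) := by
        rw [setIntegral_congr_fun measurableSet_Ici hstep, integral_Ici_natFloor_div hΔt hgeom,
          tsum_mul_left, tsum_geometric_of_lt_one (Real.exp_nonneg _) hq]
        ring
    _ ≤ _ := le_add_of_nonneg_left (mul_nonneg hΔt.le hceil)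

theorem piecewise_survival_bound_integrable (C r Δt : ℝ)
    (hC : 0 ≤ C) (hr : 0 < r) (hΔt : 0 < Δt) :
    IntegrableOn
        (fun σ : ℝ => min 1 (C * Real.exp (-r * (⌊σ / Δt⌋ : ℝ) * Δt)))
        (Set.Ici (0 : ℝ)) volume ∧
      ∫ σ in Set.Ici (0 : ℝ),
          min 1 (C * Real.exp (-r * (⌊σ / Δt⌋ : ℝ) * Δt)) ≤
        Δt * (⌈Real.log (max C 1) / (r * Δt)⌉ : ℝ) +
          C * Δt / (1 - Real.exp (-r * Δt)) :=
  piecewise_survival_bound_integrable_general C r Δt hr hΔt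
end

section
/- Let x̄ : ℝ≥0 → ℝ satisfy x̄' (t) = ω(t)·min(1 - x̄(t), g(t)) where ω, g : ℝ≥0 → ℝ≥0 are continuous and bounded, and x̄(0) ∈ [0,1]. Then x̄(t) ∈ [0,1] for all t ≥ 0 and x̄ is nondecreasing. -/
open Set

theorem upper_bound_dynamics_invariance
    (xbar : ℝ → ℝ) (ω g : ℝ → ℝ)
    (hω : Continuous ω) (hg : Continuous g)
    (hωnn : ∀ t, 0 ≤ ω t) (hgnn : ∀ t, 0 ≤ g t)
    (hωbd : ∃ M, ∀ t, ω t ≤ M) (hgbd : ∃ M, ∀ t, g t ≤ M)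
    (hderiv : ∀ t, 0 ≤ t → HasDerivAt xbar (ω t * min (1 - xbar t) (g t)) t)
    (hinit : xbar 0 ∈ Set.Icc (0 : ℝ) 1) :
    (∀ t, 0 ≤ t → xbar t ∈ Set.Icc (0 : ℝ) 1) ∧ MonotoneOn xbar (Set.Ici 0) := by
  have hcont : ContinuousOn xbar (Ici 0) := fun x hx =>
    (hderiv x hx).continuousAt.continuousWithinAt
  -- upper bound: xbar t ≤ 1 for t ≥ 0
  have hub : ∀ t, 0 ≤ t → xbar t ≤ 1 := by
    intro t ht
    have key : ∀ ε : ℝ, 0 < ε → xbar t ≤ 1 + ε * t := by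
      intro ε hε
      have := image_le_of_deriv_right_lt_deriv_boundary
        (f := xbar) (f' := fun x => ω x * min (1 - xbar x) (g x)) (a := 0) (b := t)
        (hcont.mono (Icc_subset_Ici_self))
        (fun x hx => (hderiv x hx.1).hasDerivWithinAt)
        (B := fun x => 1 + ε * x) (B' := fun _ => ε)
        (by simpa using hinit.2)
        (fun x => by
          simpa using ((hasDerivAt_id x).const_mul ε).const_add 1)
        (fun x hx hfx => by
          have hx0 : (0:ℝ) ≤ x := hx.1
          have h1 : 1 - xbar x ≤ 0 := by
            rw [hfx]; nlinarith [mul_nonneg hε.le hx0]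
          have hmin : min (1 - xbar x) (g x) ≤ 0 := le_trans (min_le_left _ _) h1
          have : ω x * min (1 - xbar x) (g x) ≤ 0 :=
            mul_nonpos_of_nonneg_of_nonpos (hωnn x) hmin
          linarith)
      exact this (right_mem_Icc.2 ht)
    rcases eq_or_lt_of_le ht with h | h
    · have := key 1 one_pos
      rw [← h] at this ⊢
      simpa using this
    · refine le_of_forall_pos_le_add fun ε hε => ?_
      have := key (ε / t) (div_pos hε h)
      rwa [div_mul_cancel₀ _ (ne_of_gt h)] at this
  -- monotonicity
  have hmono : MonotoneOn xbar (Ici 0) := by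
    apply monotoneOn_of_deriv_nonneg (convex_Ici 0) hcont
    · intro x hx
      rw [interior_Ici] at hx
      exact (hderiv x (le_of_lt hx)).differentiableAt.differentiableWithinAt
    · intro x hx
      rw [interior_Ici] at hx
      rw [(hderiv x hx.le).deriv]
      have h1 : 0 ≤ 1 - xbar x := by linarith [hub x hx.le]
      exact mul_nonneg (hωnn x) (le_min h1 (hgnn x))
  refine ⟨fun t ht => ⟨?_, hub t ht⟩, hmono⟩
  calc (0:ℝ) ≤ xbar 0 := hinit.1
    _ ≤ xbar t := hmono (self_mem_Ici) ht ht
end
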